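/- arXiv:2306.00896 — 3 statements merged into one kernel-verified Lean document; each statement's English description precedes it below -/
import Mathlib

section
/- For every fixed s ∈ ℝ, the universal profile is strictly decreasing in its index on (0,∞): for all reals 0 < m < n one has f_n(s) < f_m(s). -/
/-!
Integrating `d/dx (x^n e^{-x⁴/4 - s x²/2})` over `(0, ∞)` gives `n I_{n-1} = I_{n+3} + s I_{n+1}`,
so `f_n = I_{n+1} / (I_{n+3} + s I_{n+1})`, and it suffices that `I_{n+3} / I_{n+1}` increases
strictly with `n`. For `m < n` take `c > 0` with `c² = I_{m+3} / I_{m+1}`: the integrand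
`x^{m+1} e^{…} (x² - c²)(x^{n-m} - c^{n-m})` is positive off `x = c`, since both factors have the
sign of `x - c`, while its integral is `I_{n+3} - c² I_{n+1}`.
-/

open MeasureTheory

/-- `I k s = ∫₀^∞ x^k e^{-x⁴/4 - s x²/2} dx`. -/
noncomputable def I (k s : ℝ) : ℝ :=
  ∫ x in Set.Ioi (0 : ℝ), x ^ k * Real.exp (-x ^ 4 / 4 - s * x ^ 2 / 2)

/-- The universal profile `f n s = I (n+1) s / (n · I (n-1) s)`. -/
noncomputable def f (n s : ℝ) : ℝ := I (n + 1) s / (n * I (n - 1) s)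

open Set Real Filter

theorem integral_pos_of_ae_pos {α : Type*} [MeasurableSpace α] {μ : Measure α} (hμ : μ ≠ 0)
    {g : α → ℝ} (hg : Integrable g μ) (hpos : ∀ᵐ x ∂μ, 0 < g x) : 0 < ∫ x, g x ∂μ := by
  have : (ae μ).NeBot := ae_neBot.2 hμ
  rw [integral_pos_iff_support_of_nonneg_ae (hpos.mono fun _ h => h.le) hg]
  refine pos_iff_ne_zero.2 fun h0 => ?_
  obtain ⟨x, hx, hgx⟩ := ((measure_eq_zero_iff_ae_notMem.1 h0).and hpos).exists
  exact hx hgx.ne'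

theorem volume_restrict_Ioi_ne_zero (a : ℝ) : volume.restrict (Ioi a) ≠ 0 := by
  simp [Measure.restrict_eq_zero]

theorem rpow_sub_rpow_mul_rpow_sub_rpow_pos {x c p q : ℝ} (hx : 0 ≤ x) (hc : 0 ≤ c) (hxc : x ≠ c)
    (hp : 0 < p) (hq : 0 < q) : 0 < (x ^ p - c ^ p) * (x ^ q - c ^ q) := by
  rcases hxc.lt_or_gt with h | h
  · exact mul_pos_of_neg_of_neg (sub_neg.2 (rpow_lt_rpow hx h hp))
      (sub_neg.2 (rpow_lt_rpow hx h hq))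
  · exact mul_pos (sub_pos.2 (rpow_lt_rpow hc h hp)) (sub_pos.2 (rpow_lt_rpow hc h hq))

noncomputable def powMoment (w : ℝ → ℝ) (k : ℝ) : ℝ := ∫ x in Ioi 0, x ^ k * w x

section PowMoment

variable {w : ℝ → ℝ}

theorem powMoment_pos (hw : ∀ x ∈ Ioi 0, 0 < w x) {k : ℝ}
    (hk : IntegrableOn (fun x => x ^ k * w x) (Ioi 0)) : 0 < powMoment w k :=
  integral_pos_of_ae_pos (volume_restrict_Ioi_ne_zero 0) hk <|
    (ae_restrict_mem measurableSet_Ioi).mono fun x hx => mul_pos (rpow_pos_of_pos hx k) (hw x hx)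

theorem powMoment_mul_lt_mul_powMoment (hw : ∀ x ∈ Ioi 0, 0 < w x) {a b p : ℝ}
    (hab : a < b) (hp : 0 < p)
    (ha : IntegrableOn (fun x => x ^ a * w x) (Ioi 0))
    (hap : IntegrableOn (fun x => x ^ (a + p) * w x) (Ioi 0))
    (hb : IntegrableOn (fun x => x ^ b * w x) (Ioi 0))
    (hbp : IntegrableOn (fun x => x ^ (b + p) * w x) (Ioi 0)) :
    powMoment w b * powMoment w (a + p) < powMoment w a * powMoment w (b + p) := by
  set M := powMoment w
  have hMa := powMoment_pos hw ha
  set c := (M (a + p) / M a) ^ p⁻¹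
  have hratio : 0 ≤ M (a + p) / M a := div_nonneg (powMoment_pos hw hap).le hMa.le
  have hc : 0 ≤ c := rpow_nonneg hratio _
  have hcp : c ^ p * M a = M (a + p) := by
    rw [rpow_inv_rpow hratio hp.ne', div_mul_cancel₀ _ hMa.ne']
  have hexpand : ∀ x ∈ Ioi (0 : ℝ), x ^ a * w x * ((x ^ p - c ^ p) * (x ^ (b - a) - c ^ (b - a))) =
      x ^ (b + p) * w x - c ^ p * (x ^ b * w x)
        - c ^ (b - a) * (x ^ (a + p) * w x - c ^ p * (x ^ a * w x)) := by
    intro x hx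
    have e1 : x ^ (b + p) = x ^ a * x ^ p * x ^ (b - a) := by
      rw [← rpow_add hx, ← rpow_add hx]; ring_nf
    have e2 : x ^ b = x ^ a * x ^ (b - a) := by rw [← rpow_add hx]; ring_nf
    rw [e1, e2, rpow_add hx]
    ring
  have hbc : IntegrableOn (fun x => x ^ (b + p) * w x - c ^ p * (x ^ b * w x)) (Ioi 0) :=
    hbp.sub (hb.const_mul _)
  have hac : IntegrableOn (fun x => x ^ (a + p) * w x - c ^ p * (x ^ a * w x)) (Ioi 0) :=
    hap.sub (ha.const_mul _)
  have hpos : 0 < ∫ x in Ioi 0,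
      x ^ a * w x * ((x ^ p - c ^ p) * (x ^ (b - a) - c ^ (b - a))) := by
    have hint := (hbc.sub (hac.const_mul (c ^ (b - a)))).congr_fun
      (fun x hx => (hexpand x hx).symm) measurableSet_Ioi
    refine integral_pos_of_ae_pos (volume_restrict_Ioi_ne_zero 0) hint ?_
    filter_upwards [ae_restrict_mem measurableSet_Ioi,
      ae_restrict_of_ae (measure_eq_zero_iff_ae_notMem.1 (measure_singleton c))] with x hx hxc
    exact mul_pos (mul_pos (rpow_pos_of_pos hx a) (hw x hx))
      (rpow_sub_rpow_mul_rpow_sub_rpow_pos (le_of_lt hx) hc hxc hp (sub_pos.2 hab))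
  have hvalue : ∫ x in Ioi 0, x ^ a * w x * ((x ^ p - c ^ p) * (x ^ (b - a) - c ^ (b - a))) =
      M (b + p) - c ^ p * M b := by
    rw [setIntegral_congr_fun measurableSet_Ioi hexpand, integral_sub hbc (hac.const_mul _),
      integral_sub hbp (hb.const_mul _), integral_const_mul, integral_const_mul,
      integral_sub hap (ha.const_mul _), integral_const_mul]
    change M (b + p) - c ^ p * M b - c ^ (b - a) * (M (a + p) - c ^ p * M a) = _
    rw [hcp, sub_self, mul_zero, sub_zero]
  calc M b * M (a + p) = c ^ p * M b * M a := by rw [← hcp]; ring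
    _ < M (b + p) * M a := mul_lt_mul_of_pos_right (by linarith) hMa
    _ = M a * M (b + p) := mul_comm _ _

end PowMoment

noncomputable def quarticWeight (s x : ℝ) : ℝ := exp (-x ^ 4 / 4 - s * x ^ 2 / 2)

theorem I_eq_powMoment (k s : ℝ) : I k s = powMoment (quarticWeight s) k := rfl

theorem quarticWeight_le (s x : ℝ) :
    quarticWeight s x ≤ exp (s ^ 2 / 2) * exp (-(1 / 8) * x ^ (4 : ℝ)) := by
  rw [← exp_add, rpow_ofNat]
  exact exp_le_exp.2 (by nlinarith [sq_nonneg (x ^ 2 + 2 * s)])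

theorem integrableOn_rpow_mul_quarticWeight (s : ℝ) {k : ℝ} (hk : -1 < k) :
    IntegrableOn (fun x => x ^ k * quarticWeight s x) (Ioi 0) := by
  have hdom := (integrableOn_rpow_mul_exp_neg_mul_rpow hk (by norm_num : (0 : ℝ) < 4)
    (by norm_num : (0 : ℝ) < 1 / 8)).const_mul (exp (s ^ 2 / 2))
  refine hdom.mono' ?_ ?_
  · refine ContinuousOn.aestronglyMeasurable (fun x hx => ?_) measurableSet_Ioi
    exact ((continuousAt_rpow_const x k (Or.inl (ne_of_gt hx))).mul
      (by unfold quarticWeight; fun_prop)).continuousWithinAt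
  · filter_upwards [ae_restrict_mem measurableSet_Ioi] with x hx
    have hpos : 0 < x ^ k * quarticWeight s x := mul_pos (rpow_pos_of_pos hx k) (exp_pos _)
    rw [norm_of_nonneg hpos.le, mul_left_comm]
    exact mul_le_mul_of_nonneg_left (quarticWeight_le s x) (rpow_pos_of_pos hx k).le

theorem hasDerivAt_quarticWeight (s x : ℝ) :
    HasDerivAt (quarticWeight s) (-(x ^ 3 + s * x) * quarticWeight s x) x := by
  have hexponent : HasDerivAt (fun y => -y ^ 4 / 4 - s * y ^ 2 / 2) (-(x ^ 3 + s * x)) x := by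
    refine (((hasDerivAt_pow 4 x).neg.div_const 4).sub
      (((hasDerivAt_pow 2 x).const_mul s).div_const 2)).congr_deriv ?_
    norm_num
    ring
  exact hexponent.exp.congr_deriv (mul_comm _ _)

theorem I_pos (s : ℝ) {k : ℝ} (hk : -1 < k) : 0 < I k s :=
  I_eq_powMoment k s ▸
    powMoment_pos (fun _ _ => exp_pos _) (integrableOn_rpow_mul_quarticWeight s hk)

theorem I_mul_I_lt_I_mul_I (s : ℝ) {a b p : ℝ} (ha : -1 < a) (hab : a < b) (hp : 0 < p) :
    I b s * I (a + p) s < I a s * I (b + p) s := by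
  simp only [I_eq_powMoment]
  exact powMoment_mul_lt_mul_powMoment (fun _ _ => exp_pos _) hab hp
    (integrableOn_rpow_mul_quarticWeight s ha)
    (integrableOn_rpow_mul_quarticWeight s (by linarith))
    (integrableOn_rpow_mul_quarticWeight s (by linarith))
    (integrableOn_rpow_mul_quarticWeight s (by linarith))

theorem mul_I_sub_one (s : ℝ) {n : ℝ} (hn : 0 < n) :
    n * I (n - 1) s = I (n + 3) s + s * I (n + 1) s := by
  set q := quarticWeight s
  have hint : ∀ k : ℝ, -1 < k → IntegrableOn (fun x => x ^ k * q x) (Ioi 0) :=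
    fun k hk => integrableOn_rpow_mul_quarticWeight s hk
  have hderiv : ∀ x ∈ Ioi (0 : ℝ), HasDerivAt (fun x => x ^ n * q x)
      (n * (x ^ (n - 1) * q x) - (x ^ (n + 3) * q x + s * (x ^ (n + 1) * q x))) x := by
    intro x hx
    refine ((hasDerivAt_rpow_const (p := n) (Or.inl (ne_of_gt hx))).mul
      (hasDerivAt_quarticWeight s x)).congr_deriv ?_
    rw [rpow_add hx, rpow_add hx, rpow_ofNat, rpow_one]
    ring
  have hA : IntegrableOn (fun x => n * (x ^ (n - 1) * q x)) (Ioi 0) :=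
    (hint _ (by linarith)).const_mul n
  have hB : IntegrableOn (fun x => x ^ (n + 3) * q x) (Ioi 0) := hint _ (by linarith)
  have hC : IntegrableOn (fun x => s * (x ^ (n + 1) * q x)) (Ioi 0) :=
    (hint _ (by linarith)).const_mul s
  have hF'int := hA.fun_sub (hB.fun_add hC)
  have hsplit : ∫ x in Ioi 0,
      n * (x ^ (n - 1) * q x) - (x ^ (n + 3) * q x + s * (x ^ (n + 1) * q x)) =
      n * I (n - 1) s - (I (n + 3) s + s * I (n + 1) s) := by
    rw [integral_sub hA (hB.fun_add hC), integral_add hB hC, integral_const_mul,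
      integral_const_mul, I_eq_powMoment, I_eq_powMoment, I_eq_powMoment]
    rfl
  have hFTC := integral_Ioi_of_hasDerivAt_of_tendsto
    ((continuousAt_rpow_const 0 n (Or.inr hn.le)).mul
      (hasDerivAt_quarticWeight s 0).continuousAt).continuousWithinAt
    hderiv hF'int
    (tendsto_zero_of_hasDerivAt_of_integrableOn_Ioi hderiv hF'int (hint n (by linarith)))
  rw [hsplit] at hFTC
  simp only [Pi.mul_apply, zero_rpow hn.ne', zero_mul, sub_zero] at hFTC
  linarith

/-- For every fixed `s`, the universal profile is strictly decreasing in its index on `(0,∞)`. -/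
theorem universal_profile_strict_anti_in_n (s : ℝ) :
    ∀ m n : ℝ, 0 < m → m < n → f n s < f m s := by
  intro m n hm hmn
  have hn : 0 < n := hm.trans hmn
  have hmoment : I (n + 1) s * I (m + 3) s < I (m + 1) s * I (n + 3) s := by
    have h := I_mul_I_lt_I_mul_I s (by linarith : -1 < m + 1) (by linarith : m + 1 < n + 1) two_pos
    rwa [show m + 1 + 2 = m + 3 by ring, show n + 1 + 2 = n + 3 by ring] at h
  rw [f, f, div_lt_div_iff₀ (mul_pos hn (I_pos s (by linarith)))
    (mul_pos hm (I_pos s (by linarith))), mul_I_sub_one s hm, mul_I_sub_one s hn]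
  linarith
end

section
/- For every real n > 0, the universal kurtosis R_n^{(4)}(s) = Σ_{n,4}(s) / (Σ_{n,2}(s))² satisfies lim_{s→+∞} R_n^{(4)}(s) = (n+2)/n and lim_{s→−∞} R_n^{(4)}(s) = 1. -/
/-!
After `y = x²`, `I_k(s)` is half of `J_a(s) = ∫₀^∞ y^a e^{-y²/4 - s y/2} dy` (`halfGaussianMoment`)
with `a = (k - 1)/2`, and the kurtosis becomes `J_{a+2} J_a / J_{a+1}²` with `a = n/2 - 1`. Such a
ratio is unchanged when `J_b(s)` is multiplied by `u(s) v(s)^b`, so it suffices to find `u, v`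
making `J_b` converge.

As `s → +∞`, the substitution `y = 2z/s` gives `(s/2)^{a+1} J_a(s) → Γ(a+1)`, so the ratio tends
to `Γ(a+3) Γ(a+1) / Γ(a+2)² = (a+2)/(a+1)`. As `s = -t → -∞`, completing the square gives
`e^{-t²/4} t^{-a} J_a(-t) = ∫₀^∞ (y/t)^a e^{-(y-t)²/4} dy`. The Gaussian factor concentrates at
`y = t`: the part `y ≤ t/2` is `O(t e^{-t²/16})` (this split isolates the singularity of `y^a`
at `0` when `a < 0`), and after the shift `y = t + v` dominated convergence sends the rest to
`∫ e^{-v²/4} dv`, a limit common to all `b` that cancels in the ratio.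
-/

open MeasureTheory

/-- The moment `Σ_{n,k}(s) = I_{k+n-1}(s) / I_{n-1}(s)`. -/
noncomputable def Sig (n k s : ℝ) : ℝ := I (k + n - 1) s / I (n - 1) s

open Real Set Filter Topology

theorem setIntegral_Ioi_comp_add_right {E : Type*} [NormedAddCommGroup E] [NormedSpace ℝ E]
    (g : ℝ → E) (a d : ℝ) : ∫ x in Ioi a, g (x + d) = ∫ x in Ioi (a + d), g x := by
  rw [← integral_indicator measurableSet_Ioi, ← integral_indicator measurableSet_Ioi,
    ← integral_add_right_eq_self ((Ioi (a + d)).indicator g) d]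
  congr 1 with x
  simp only [indicator, mem_Ioi, add_lt_add_iff_right]

theorem tendsto_mul_exp_neg_mul_sq_atTop {b : ℝ} (hb : 0 < b) :
    Tendsto (fun t : ℝ => t * exp (-b * t ^ 2)) atTop (𝓝 0) := by
  refine ((tendsto_rpow_abs_mul_exp_neg_mul_sq_cocompact hb 1).mono_left
    atTop_le_cocompact).congr' ?_
  filter_upwards [eventually_ge_atTop 0] with t ht
  rw [abs_of_nonneg ht, rpow_one]

theorem rpow_le_two_rpow_abs_mul_exp (a : ℝ) {x : ℝ} (hx : 1 / 2 ≤ x) :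
    x ^ a ≤ 2 ^ |a| * exp (|a| * |x - 1|) := by
  have hx0 : 0 < x := by linarith
  have h2 : 1 ≤ (2 : ℝ) ^ |a| := one_le_rpow one_le_two (abs_nonneg a)
  have hexp : 1 ≤ exp (|a| * |x - 1|) := one_le_exp (by positivity)
  rcases le_or_gt 0 a with ha | ha
  · calc x ^ a ≤ exp (x - 1) ^ a := by
          gcongr
          linarith [add_one_le_exp (x - 1)]
      _ = exp (|a| * (x - 1)) := by rw [← exp_mul, abs_of_nonneg ha, mul_comm]
      _ ≤ exp (|a| * |x - 1|) := by gcongr; exact le_abs_self _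
      _ ≤ 2 ^ |a| * exp (|a| * |x - 1|) := le_mul_of_one_le_left (exp_pos _).le h2
  · calc x ^ a ≤ (1 / 2) ^ a := rpow_le_rpow_of_nonpos (by norm_num) hx ha.le
      _ = 2 ^ |a| := by rw [abs_of_neg ha, one_div, inv_rpow zero_le_two, rpow_neg zero_le_two]
      _ ≤ 2 ^ |a| * exp (|a| * |x - 1|) := le_mul_of_one_le_right (by positivity) hexp

theorem rpow_add_two_mul_rpow {x : ℝ} (hx : 0 < x) (a : ℝ) :
    x ^ (a + 2) * x ^ a = (x ^ (a + 1)) ^ 2 := by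
  rw [sq, ← rpow_add hx, ← rpow_add hx]
  ring_nf

theorem div_div_div_sq_eq_mul_div (x y z : ℝ) : x / z / (y / z) ^ 2 = x * z / y ^ 2 := by
  rcases eq_or_ne z 0 with rfl | hz
  · simp
  · field_simp

theorem tendsto_mul_div_sq_of_tendsto_mul {ι : Type*} {l : Filter ι} {f₀ f₁ f₂ w₀ w₁ w₂ : ι → ℝ}
    {c₀ c₁ c₂ : ℝ} (h₀ : Tendsto (fun x => w₀ x * f₀ x) l (𝓝 c₀))
    (h₁ : Tendsto (fun x => w₁ x * f₁ x) l (𝓝 c₁)) (h₂ : Tendsto (fun x => w₂ x * f₂ x) l (𝓝 c₂))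
    (hc₁ : c₁ ≠ 0) (hw : ∀ᶠ x in l, w₁ x ≠ 0 ∧ w₁ x ^ 2 = w₂ x * w₀ x) :
    Tendsto (fun x => f₂ x * f₀ x / f₁ x ^ 2) l (𝓝 (c₂ * c₀ / c₁ ^ 2)) := by
  refine ((h₂.mul h₀).div (h₁.pow 2) (pow_ne_zero 2 hc₁)).congr' ?_
  filter_upwards [hw] with x ⟨hw₁, hsq⟩
  rw [Pi.div_apply, mul_pow, mul_mul_mul_comm, ← hsq, mul_div_mul_left _ _ (pow_ne_zero 2 hw₁)]

theorem Gamma_add_three_mul_Gamma_add_one_div_sq {a : ℝ} (ha : -1 < a) :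
    Gamma (a + 2 + 1) * Gamma (a + 1) / Gamma (a + 1 + 1) ^ 2 = (a + 2) / (a + 1) := by
  have hΓ : 0 < Gamma (a + 1) := Gamma_pos_of_pos (by linarith)
  rw [Gamma_add_one (by linarith), show a + 2 = a + 1 + 1 by ring, Gamma_add_one (by linarith)]
  field_simp

noncomputable def halfGaussianMoment (a s : ℝ) : ℝ :=
  ∫ y in Ioi 0, y ^ a * exp (-y ^ 2 / 4 - s * y / 2)

theorem integrableOn_halfGaussianMoment_integrand {a : ℝ} (ha : -1 < a) (s : ℝ) :
    IntegrableOn (fun y : ℝ => y ^ a * exp (-y ^ 2 / 4 - s * y / 2)) (Ioi 0) := by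
  refine ((integrableOn_rpow_mul_exp_neg_mul_sq (b := 1 / 8) (by norm_num) ha).const_mul
    (exp (s ^ 2 / 2))).mono' (by fun_prop) ?_
  filter_upwards [ae_restrict_mem measurableSet_Ioi] with y (hy : 0 < y)
  have hexp : exp (-y ^ 2 / 4 - s * y / 2) ≤ exp (s ^ 2 / 2) * exp (-(1 / 8) * y ^ 2) := by
    rw [← exp_add, exp_le_exp]
    nlinarith [sq_nonneg (2 * s + y)]
  rw [norm_mul, norm_of_nonneg (rpow_nonneg hy.le a), norm_of_nonneg (exp_pos _).le]
  calc y ^ a * exp (-y ^ 2 / 4 - s * y / 2)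
      ≤ y ^ a * (exp (s ^ 2 / 2) * exp (-(1 / 8) * y ^ 2)) := by gcongr
    _ = exp (s ^ 2 / 2) * (y ^ a * exp (-(1 / 8) * y ^ 2)) := by ring

theorem I_eq_halfGaussianMoment (k s : ℝ) : I k s = halfGaussianMoment ((k - 1) / 2) s / 2 := by
  rw [halfGaussianMoment, ← integral_comp_rpow_Ioi _ two_ne_zero, I, ← integral_div]
  refine setIntegral_congr_fun measurableSet_Ioi fun x (hx : 0 < x) => ?_
  have hsq : x ^ (2 : ℝ) = x ^ 2 := rpow_two x
  have hpow : x ^ (2 - 1 : ℝ) * (x ^ (2 : ℝ)) ^ ((k - 1) / 2) = x ^ k := by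
    rw [← rpow_mul hx.le, ← rpow_add hx]; ring_nf
  simp only [smul_eq_mul, abs_two]
  rw [← hpow, hsq, ← pow_mul]
  ring

theorem rpow_mul_halfGaussianMoment_eq (a : ℝ) {s : ℝ} (hs : 0 < s) :
    (s / 2) ^ (a + 1) * halfGaussianMoment a s =
      ∫ z in Ioi 0, z ^ a * exp (-(z / s) ^ 2 - z) := by
  have hb : 0 < 2 / s := by positivity
  have key := integral_comp_mul_left_Ioi (fun y : ℝ => y ^ a * exp (-y ^ 2 / 4 - s * y / 2)) 0 hb
  rw [mul_zero, smul_eq_mul, ← halfGaussianMoment] at key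
  rw [← mul_inv_cancel_left₀ hb.ne' (halfGaussianMoment a s), ← key, ← mul_assoc,
    ← integral_const_mul]
  refine setIntegral_congr_fun measurableSet_Ioi fun z (hz : 0 < z) => ?_
  have hexp : -(2 / s * z) ^ 2 / 4 - s * (2 / s * z) / 2 = -(z / s) ^ 2 - z := by
    field_simp; ring
  rw [hexp, mul_rpow hb.le hz.le, rpow_add_one (by positivity), div_rpow hs.le zero_le_two,
    div_rpow zero_le_two hs.le]
  field_simp

theorem tendsto_integral_rpow_mul_exp_neg_sq_div_sub {a : ℝ} (ha : -1 < a) :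
    Tendsto (fun s => ∫ z in Ioi 0, z ^ a * exp (-(z / s) ^ 2 - z)) atTop
      (𝓝 (Gamma (a + 1))) := by
  have hGamma : Gamma (a + 1) = ∫ z in Ioi 0, z ^ a * exp (-z) := by
    rw [Gamma_eq_integral (by linarith), add_sub_cancel_right]
    simp_rw [mul_comm]
  rw [hGamma]
  refine tendsto_integral_filter_of_dominated_convergence (fun z => z ^ a * exp (-z))
    (.of_forall fun s => by fun_prop) (.of_forall fun s => ?_) ?_ ?_
  · filter_upwards [ae_restrict_mem measurableSet_Ioi] with z (hz : 0 < z)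
    rw [norm_mul, norm_of_nonneg (rpow_nonneg hz.le a), norm_of_nonneg (exp_pos _).le]
    gcongr
    nlinarith [sq_nonneg (z / s)]
  · have h := GammaIntegral_convergent (s := a + 1) (by linarith)
    simp_rw [add_sub_cancel_right, mul_comm (exp _)] at h
    exact h
  · filter_upwards with z
    have hsq : Tendsto (fun s : ℝ => (z / s) ^ 2) atTop (𝓝 0) := by
      simpa using ((tendsto_const_nhds (x := z)).div_atTop tendsto_id).pow 2
    simpa using ((hsq.neg.sub_const z).rexp).const_mul (z ^ a)

theorem tendsto_rpow_mul_halfGaussianMoment_atTop {a : ℝ} (ha : -1 < a) :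
    Tendsto (fun s => (s / 2) ^ (a + 1) * halfGaussianMoment a s) atTop (𝓝 (Gamma (a + 1))) :=
  (tendsto_integral_rpow_mul_exp_neg_sq_div_sub ha).congr' <| by
    filter_upwards [eventually_gt_atTop 0] with s hs
    exact (rpow_mul_halfGaussianMoment_eq a hs).symm

theorem rpow_div_mul_exp_neg_sub_sq (a : ℝ) {t y : ℝ} (ht : 0 < t) (hy : 0 ≤ y) :
    (y / t) ^ a * exp (-(y - t) ^ 2 / 4) =
      exp (-t ^ 2 / 4) / t ^ a * (y ^ a * exp (-y ^ 2 / 4 - -t * y / 2)) := by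
  rw [div_rpow hy ht.le, div_mul_eq_mul_div, div_mul_eq_mul_div, mul_comm (exp _), mul_assoc,
    ← exp_add]
  ring_nf

theorem exp_div_rpow_mul_halfGaussianMoment_neg (a : ℝ) {t : ℝ} (ht : 0 < t) :
    exp (-t ^ 2 / 4) / t ^ a * halfGaussianMoment a (-t) =
      ∫ y in Ioi 0, (y / t) ^ a * exp (-(y - t) ^ 2 / 4) := by
  rw [halfGaussianMoment, ← integral_const_mul]
  exact setIntegral_congr_fun measurableSet_Ioi fun y (hy : 0 < y) =>
    (rpow_div_mul_exp_neg_sub_sq a ht hy.le).symm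

theorem integrableOn_rpow_div_mul_exp_neg_sub_sq {a : ℝ} (ha : -1 < a) {t : ℝ} (ht : 0 < t) :
    IntegrableOn (fun y => (y / t) ^ a * exp (-(y - t) ^ 2 / 4)) (Ioi 0) :=
  IntegrableOn.congr_fun ((integrableOn_halfGaussianMoment_integrand ha (-t)).const_mul _)
    (fun y (hy : 0 < y) => (rpow_div_mul_exp_neg_sub_sq a ht hy.le).symm) measurableSet_Ioi

theorem setIntegral_Ioc_rpow_div_mul_exp_neg_sub_sq_le {a : ℝ} (ha : -1 < a) {t : ℝ} (ht : 0 < t) :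
    ∫ y in Ioc 0 (t / 2), (y / t) ^ a * exp (-(y - t) ^ 2 / 4) ≤
      (∫ w in (0 : ℝ)..1 / 2, w ^ a) * (t * exp (-(1 / 16) * t ^ 2)) := by
  have hint : IntegrableOn (fun y => (y / t) ^ a) (Ioc 0 (t / 2)) := by
    refine (((intervalIntegral.intervalIntegrable_rpow' ha).div_const (t ^ a)).1).congr_fun
      (fun y (hy : y ∈ Ioc 0 (t / 2)) => ?_) measurableSet_Ioc
    exact (div_rpow hy.1.le ht.le a).symm
  calc ∫ y in Ioc 0 (t / 2), (y / t) ^ a * exp (-(y - t) ^ 2 / 4)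
      ≤ ∫ y in Ioc 0 (t / 2), exp (-(1 / 16) * t ^ 2) * (y / t) ^ a := by
        refine integral_mono_of_nonneg ?_ (hint.const_mul _) ?_
        · filter_upwards [ae_restrict_mem measurableSet_Ioc] with y ⟨hy0, _⟩
          positivity
        · filter_upwards [ae_restrict_mem measurableSet_Ioc] with y ⟨hy0, hyt⟩
          rw [mul_comm]
          exact mul_le_mul_of_nonneg_right (exp_le_exp.mpr (by nlinarith))
            (rpow_nonneg (div_nonneg hy0.le ht.le) a)
    _ = exp (-(1 / 16) * t ^ 2) * (t * ∫ w in (0 : ℝ)..1 / 2, w ^ a) := by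
        rw [integral_const_mul, ← intervalIntegral.integral_of_le (by positivity),
          intervalIntegral.integral_comp_div (fun w => w ^ a) ht.ne', zero_div,
          div_div_cancel_left' ht.ne', smul_eq_mul, ← one_div]
    _ = (∫ w in (0 : ℝ)..1 / 2, w ^ a) * (t * exp (-(1 / 16) * t ^ 2)) := by ring

theorem tendsto_setIntegral_Ioc_rpow_div_mul_exp_neg_sub_sq {a : ℝ} (ha : -1 < a) :
    Tendsto (fun t => ∫ y in Ioc 0 (t / 2), (y / t) ^ a * exp (-(y - t) ^ 2 / 4)) atTop (𝓝 0) := by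
  have hlim := (tendsto_mul_exp_neg_mul_sq_atTop (b := 1 / 16) (by norm_num)).const_mul
    (∫ w in (0 : ℝ)..1 / 2, w ^ a)
  rw [mul_zero] at hlim
  refine tendsto_of_tendsto_of_tendsto_of_le_of_le' tendsto_const_nhds hlim ?_ ?_
  · filter_upwards [eventually_gt_atTop 0] with t ht
    exact setIntegral_nonneg measurableSet_Ioc fun y ⟨hy0, _⟩ => by positivity
  · filter_upwards [eventually_gt_atTop 0] with t ht
    exact setIntegral_Ioc_rpow_div_mul_exp_neg_sub_sq_le ha ht

theorem add_div_rpow_mul_exp_neg_sq_le (a : ℝ) {t v : ℝ} (ht : 1 ≤ t) (hv : -t / 2 < v) :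
    ((v + t) / t) ^ a * exp (-v ^ 2 / 4) ≤ 2 ^ |a| * exp (2 * a ^ 2) * exp (-(1 / 8) * v ^ 2) := by
  have hx : 1 / 2 ≤ (v + t) / t := by rw [le_div_iff₀ (by linarith)]; linarith
  have hdist : |(v + t) / t - 1| ≤ |v| := by
    rw [show (v + t) / t - 1 = v / t by field_simp; ring, abs_div,
      abs_of_pos (by linarith : 0 < t)]
    exact div_le_self (abs_nonneg v) ht
  calc ((v + t) / t) ^ a * exp (-v ^ 2 / 4)
      ≤ 2 ^ |a| * exp (|a| * |v|) * exp (-v ^ 2 / 4) := by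
        gcongr
        exact (rpow_le_two_rpow_abs_mul_exp a hx).trans (mul_le_mul_of_nonneg_left
          (exp_le_exp.mpr (mul_le_mul_of_nonneg_left hdist (abs_nonneg a))) (by positivity))
    _ = 2 ^ |a| * exp (|a| * |v| - v ^ 2 / 4) := by rw [mul_assoc, ← exp_add]; ring_nf
    _ ≤ 2 ^ |a| * exp (2 * a ^ 2 - 1 / 8 * v ^ 2) := by
        gcongr 2 ^ |a| * exp ?_
        nlinarith [sq_nonneg (|v| - 4 * |a|), sq_abs v, sq_abs a]
    _ = 2 ^ |a| * exp (2 * a ^ 2) * exp (-(1 / 8) * v ^ 2) := by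
        rw [mul_assoc, ← exp_add]; ring_nf

theorem tendsto_add_div_rpow_atTop (a v : ℝ) :
    Tendsto (fun t : ℝ => ((v + t) / t) ^ a) atTop (𝓝 1) := by
  have hbase : Tendsto (fun t : ℝ => v / t + 1) atTop (𝓝 1) := by
    simpa using ((tendsto_const_nhds (x := v)).div_atTop tendsto_id).add_const 1
  have h := hbase.rpow_const (p := a) (.inl one_ne_zero)
  rw [one_rpow] at h
  refine h.congr' ?_
  filter_upwards [eventually_gt_atTop 0] with t ht
  rw [div_add_one ht.ne']

theorem tendsto_setIntegral_Ioi_rpow_div_mul_exp_neg_sub_sq (a : ℝ) :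
    Tendsto (fun t => ∫ y in Ioi (t / 2), (y / t) ^ a * exp (-(y - t) ^ 2 / 4)) atTop
      (𝓝 (∫ v, exp (-v ^ 2 / 4))) := by
  have hshift : ∀ t, ∫ y in Ioi (t / 2), (y / t) ^ a * exp (-(y - t) ^ 2 / 4) =
      ∫ v, (Ioi (-t / 2)).indicator (fun v => ((v + t) / t) ^ a * exp (-v ^ 2 / 4)) v := by
    intro t
    have h := setIntegral_Ioi_comp_add_right (fun y => (y / t) ^ a * exp (-(y - t) ^ 2 / 4))
      (-t / 2) t
    simp only [add_sub_cancel_right] at h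
    rw [integral_indicator measurableSet_Ioi, h, show -t / 2 + t = t / 2 by ring]
  simp_rw [hshift]
  refine tendsto_integral_filter_of_dominated_convergence _
    (.of_forall fun t =>
      (Measurable.indicator (by fun_prop) measurableSet_Ioi).aestronglyMeasurable) ?_
    ((integrable_exp_neg_mul_sq (b := 1 / 8) (by norm_num)).const_mul (2 ^ |a| * exp (2 * a ^ 2)))
    (.of_forall fun v => ?_)
  · filter_upwards [eventually_ge_atTop 1] with t ht
    refine .of_forall fun v => ?_
    by_cases hv : v ∈ Ioi (-t / 2)
    · have hvt : 0 ≤ (v + t) / t := div_nonneg (by linarith [mem_Ioi.mp hv]) (by linarith)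
      rw [indicator_of_mem hv, norm_of_nonneg (by positivity)]
      exact add_div_rpow_mul_exp_neg_sq_le a ht hv
    · rw [indicator_of_notMem hv, norm_zero]
      positivity
  · have hlim := (tendsto_add_div_rpow_atTop a v).mul_const (exp (-v ^ 2 / 4))
    rw [one_mul] at hlim
    refine hlim.congr' ?_
    filter_upwards [eventually_gt_atTop (-2 * v)] with t ht
    rw [indicator_of_mem (show v ∈ Ioi (-t / 2) by simp only [mem_Ioi]; linarith)]

theorem tendsto_exp_div_rpow_mul_halfGaussianMoment_neg {a : ℝ} (ha : -1 < a) :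
    Tendsto (fun t => exp (-t ^ 2 / 4) / t ^ a * halfGaussianMoment a (-t)) atTop
      (𝓝 (∫ v, exp (-v ^ 2 / 4))) := by
  have hsum := (tendsto_setIntegral_Ioc_rpow_div_mul_exp_neg_sub_sq ha).add
    (tendsto_setIntegral_Ioi_rpow_div_mul_exp_neg_sub_sq a)
  rw [zero_add] at hsum
  refine hsum.congr' ?_
  filter_upwards [eventually_gt_atTop 0] with t ht
  have hint := integrableOn_rpow_div_mul_exp_neg_sub_sq ha ht
  rw [exp_div_rpow_mul_halfGaussianMoment_neg a ht,
    ← Ioc_union_Ioi_eq_Ioi (by positivity : (0 : ℝ) ≤ t / 2)]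
  exact (setIntegral_union (Ioc_disjoint_Ioi le_rfl) measurableSet_Ioi
    (hint.mono_set Ioc_subset_Ioi_self) (hint.mono_set (Ioi_subset_Ioi (by positivity)))).symm

theorem tendsto_halfGaussianMoment_ratio_atTop {a : ℝ} (ha : -1 < a) :
    Tendsto (fun s => halfGaussianMoment (a + 2) s * halfGaussianMoment a s /
      halfGaussianMoment (a + 1) s ^ 2) atTop (𝓝 ((a + 2) / (a + 1))) := by
  rw [← Gamma_add_three_mul_Gamma_add_one_div_sq ha]
  refine tendsto_mul_div_sq_of_tendsto_mul (tendsto_rpow_mul_halfGaussianMoment_atTop ha)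
    (tendsto_rpow_mul_halfGaussianMoment_atTop (by linarith))
    (tendsto_rpow_mul_halfGaussianMoment_atTop (by linarith))
    (Gamma_pos_of_pos (by linarith)).ne' ?_
  filter_upwards [eventually_gt_atTop 0] with s hs
  have hs2 : 0 < s / 2 := by positivity
  refine ⟨(rpow_pos_of_pos hs2 _).ne', ?_⟩
  rw [← rpow_add_two_mul_rpow hs2]
  ring_nf

theorem tendsto_halfGaussianMoment_ratio_atBot {a : ℝ} (ha : -1 < a) :
    Tendsto (fun s => halfGaussianMoment (a + 2) s * halfGaussianMoment a s /
      halfGaussianMoment (a + 1) s ^ 2) atBot (𝓝 1) := by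
  have hL : (∫ v, exp (-v ^ 2 / 4)) ≠ 0 := by
    refine (integral_exp_pos ?_).ne'
    simpa [neg_div, div_eq_inv_mul] using integrable_exp_neg_mul_sq (b := 1 / 4) (by norm_num)
  have h := tendsto_mul_div_sq_of_tendsto_mul (f₀ := fun t => halfGaussianMoment a (-t))
    (f₁ := fun t => halfGaussianMoment (a + 1) (-t))
    (f₂ := fun t => halfGaussianMoment (a + 2) (-t))
    (tendsto_exp_div_rpow_mul_halfGaussianMoment_neg ha)
    (tendsto_exp_div_rpow_mul_halfGaussianMoment_neg (by linarith))
    (tendsto_exp_div_rpow_mul_halfGaussianMoment_neg (by linarith)) hL ?_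
  · rw [← sq, div_self (pow_ne_zero 2 hL)] at h
    simpa [Function.comp_def] using h.comp tendsto_neg_atBot_atTop
  filter_upwards [eventually_gt_atTop 0] with t ht
  refine ⟨by positivity, ?_⟩
  rw [div_pow, div_mul_div_comm, ← sq, rpow_add_two_mul_rpow ht]

theorem kurtosis_eq_halfGaussianMoment_ratio (n s : ℝ) :
    Sig n 4 s / Sig n 2 s ^ 2 = halfGaussianMoment (n / 2 - 1 + 2) s *
      halfGaussianMoment (n / 2 - 1) s / halfGaussianMoment (n / 2 - 1 + 1) s ^ 2 := by
  rw [Sig, Sig, div_div_div_sq_eq_mul_div, I_eq_halfGaussianMoment, I_eq_halfGaussianMoment,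
    I_eq_halfGaussianMoment, show (4 + n - 1 - 1) / 2 = n / 2 - 1 + 2 by ring,
    show (2 + n - 1 - 1) / 2 = n / 2 - 1 + 1 by ring, show (n - 1 - 1) / 2 = n / 2 - 1 by ring]
  ring

/-- The universal kurtosis `R_n^{(4)}(s) = Σ_{n,4}(s)/Σ_{n,2}(s)²` tends to `(n+2)/n`
as `s → +∞` and tends to `1` as `s → -∞`. -/
theorem kurtosis_limits (n : ℝ) (hn : 0 < n) :
    Filter.Tendsto (fun s : ℝ => Sig n 4 s / (Sig n 2 s) ^ 2) Filter.atTop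
      (nhds ((n + 2) / n)) ∧
    Filter.Tendsto (fun s : ℝ => Sig n 4 s / (Sig n 2 s) ^ 2) Filter.atBot (nhds 1) := by
  have ha : -1 < n / 2 - 1 := by linarith
  simp_rw [kurtosis_eq_halfGaussianMoment_ratio]
  refine ⟨?_, tendsto_halfGaussianMoment_ratio_atBot ha⟩
  convert tendsto_halfGaussianMoment_ratio_atTop ha using 2
  rw [show n / 2 - 1 + 2 = (n + 2) / 2 by ring, show n / 2 - 1 + 1 = n / 2 by ring,
    div_div_div_cancel_right₀ two_ne_zero]
end

section
/- For all reals −1 < k < k′, every real q > 0, and every s ∈ ℝ, the moment ratio I_{q+k}(s)/I_k(s) is strictly increasing in the order k: I_{q+k′}(s) · I_k(s) > I_{q+k}(s) · I_{k′}(s). -/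
/-!
Chebyshev's integral inequality, by symmetrization: for a weight `w`,
`∬ (f x - f y) (g x - g y) w x w y = 2 ((∫ f g w) (∫ w) - (∫ f w) (∫ g w))`,
and the integrand is positive off the diagonal when `w > 0` and `f`, `g` are strictly
increasing. Apply this on `(0, ∞)` to `w x = x^k e^{-x⁴/4 - s x²/2}`, `f x = x^q` and
`g x = x^(k' - k)`, whose weighted integrals are `I (q + k')`, `I k`, `I (q + k)` and `I k'`.
-/

open MeasureTheory Set Real

section Chebyshev

variable {α : Type*} {f g w : α → ℝ}

def chebyshevKernel (f g w : α → ℝ) (p : α × α) : ℝ :=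
  (f p.1 - f p.2) * (g p.1 - g p.2) * (w p.1 * w p.2)

lemma chebyshevKernel_eq (p : α × α) :
    chebyshevKernel f g w p =
      f p.1 * g p.1 * w p.1 * w p.2 - f p.1 * w p.1 * (g p.2 * w p.2)
        - g p.1 * w p.1 * (f p.2 * w p.2) + w p.1 * (f p.2 * g p.2 * w p.2) := by
  unfold chebyshevKernel
  ring

lemma chebyshevKernel_pos [LinearOrder α] {s : Set α} (hf : StrictMonoOn f s)
    (hg : StrictMonoOn g s) (hw : ∀ x ∈ s, 0 < w x) {x y : α} (hx : x ∈ s) (hy : y ∈ s)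
    (hxy : x ≠ y) : 0 < chebyshevKernel f g w (x, y) := by
  have hww : 0 < w x * w y := mul_pos (hw x hx) (hw y hy)
  rcases hxy.lt_or_gt with hlt | hgt
  · exact mul_pos (mul_pos_of_neg_of_neg (sub_neg.2 (hf hx hy hlt)) (sub_neg.2 (hg hx hy hlt))) hww
  · exact mul_pos (mul_pos (sub_pos.2 (hf hy hx hgt)) (sub_pos.2 (hg hy hx hgt))) hww

variable [MeasurableSpace α] {μ : Measure α}

lemma integrable_chebyshevKernel (hw : Integrable w μ) (hfw : Integrable (fun x ↦ f x * w x) μ)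
    (hgw : Integrable (fun x ↦ g x * w x) μ) (hfgw : Integrable (fun x ↦ f x * g x * w x) μ) :
    Integrable (chebyshevKernel f g w) (μ.prod μ) := by
  simp_rw [funext chebyshevKernel_eq]
  exact (((hfgw.mul_prod hw).sub (hfw.mul_prod hgw)).sub (hgw.mul_prod hfw)).add
    (hw.mul_prod hfgw)

lemma integral_chebyshevKernel [SFinite μ] (hw : Integrable w μ)
    (hfw : Integrable (fun x ↦ f x * w x) μ)
    (hgw : Integrable (fun x ↦ g x * w x) μ) (hfgw : Integrable (fun x ↦ f x * g x * w x) μ) :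
    ∫ p, chebyshevKernel f g w p ∂μ.prod μ =
      2 * ((∫ x, f x * g x * w x ∂μ) * (∫ x, w x ∂μ)
        - (∫ x, f x * w x ∂μ) * ∫ x, g x * w x ∂μ) := by
  have h1 : Integrable (fun p : α × α ↦ f p.1 * g p.1 * w p.1 * w p.2) (μ.prod μ) :=
    hfgw.mul_prod hw
  have h2 : Integrable (fun p : α × α ↦ f p.1 * w p.1 * (g p.2 * w p.2)) (μ.prod μ) :=
    hfw.mul_prod hgw
  have h3 : Integrable (fun p : α × α ↦ g p.1 * w p.1 * (f p.2 * w p.2)) (μ.prod μ) :=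
    hgw.mul_prod hfw
  have h4 : Integrable (fun p : α × α ↦ w p.1 * (f p.2 * g p.2 * w p.2)) (μ.prod μ) :=
    hw.mul_prod hfgw
  have h12 : Integrable (fun p : α × α ↦ f p.1 * g p.1 * w p.1 * w p.2
      - f p.1 * w p.1 * (g p.2 * w p.2)) (μ.prod μ) := h1.sub h2
  have h123 : Integrable (fun p : α × α ↦ f p.1 * g p.1 * w p.1 * w p.2
      - f p.1 * w p.1 * (g p.2 * w p.2) - g p.1 * w p.1 * (f p.2 * w p.2)) (μ.prod μ) :=
    h12.sub h3
  simp_rw [chebyshevKernel_eq]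
  rw [integral_add h123 h4, integral_sub h12 h3, integral_sub h1 h2,
    integral_prod_mul (fun x ↦ f x * g x * w x) w,
    integral_prod_mul (fun x ↦ f x * w x) (fun x ↦ g x * w x),
    integral_prod_mul (fun x ↦ g x * w x) (fun x ↦ f x * w x),
    integral_prod_mul w (fun x ↦ f x * g x * w x)]
  ring

lemma integral_chebyshevKernel_pos [LinearOrder α] [SFinite μ] {s : Set α}
    (hf : StrictMonoOn f s) (hg : StrictMonoOn g s) (hw : ∀ x ∈ s, 0 < w x)
    (hs : ∀ᵐ x ∂μ, x ∈ s) (hμ : 0 < μ.prod μ {p | p.1 < p.2})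
    (hint : Integrable (chebyshevKernel f g w) (μ.prod μ)) :
    0 < ∫ p, chebyshevKernel f g w p ∂μ.prod μ := by
  have hmem : ∀ᵐ p ∂μ.prod μ, p.1 ∈ s ∧ p.2 ∈ s :=
    (Measure.quasiMeasurePreserving_fst.ae hs).and (Measure.quasiMeasurePreserving_snd.ae hs)
  have hnonneg : 0 ≤ᵐ[μ.prod μ] chebyshevKernel f g w := by
    filter_upwards [hmem] with ⟨x, y⟩ ⟨hx, hy⟩
    rcases eq_or_ne x y with rfl | hxy
    · simp [chebyshevKernel]
    · exact (chebyshevKernel_pos hf hg hw hx hy hxy).le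
  rw [integral_pos_iff_support_of_nonneg_ae hnonneg hint]
  refine hμ.trans_le (measure_mono_ae ?_)
  filter_upwards [hmem] with ⟨x, y⟩ ⟨hx, hy⟩ hlt
  exact (chebyshevKernel_pos hf hg hw hx hy (ne_of_lt hlt)).ne'

theorem integral_mul_integral_lt_of_strictMonoOn [LinearOrder α] [SFinite μ] {s : Set α}
    (hf : StrictMonoOn f s) (hg : StrictMonoOn g s) (hw : ∀ x ∈ s, 0 < w x)
    (hs : ∀ᵐ x ∂μ, x ∈ s) (hμ : 0 < μ.prod μ {p | p.1 < p.2}) (hwi : Integrable w μ)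
    (hfw : Integrable (fun x ↦ f x * w x) μ) (hgw : Integrable (fun x ↦ g x * w x) μ)
    (hfgw : Integrable (fun x ↦ f x * g x * w x) μ) :
    (∫ x, f x * w x ∂μ) * (∫ x, g x * w x ∂μ) < (∫ x, f x * g x * w x ∂μ) * ∫ x, w x ∂μ := by
  have hpos := integral_chebyshevKernel_pos hf hg hw hs hμ
    (integrable_chebyshevKernel hwi hfw hgw hfgw)
  rw [integral_chebyshevKernel hwi hfw hgw hfgw] at hpos
  linarith

end Chebyshev

lemma volume_restrict_Ioi_prod_lt_pos (a : ℝ) :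
    0 < ((volume.restrict (Ioi a)).prod (volume.restrict (Ioi a))) {p : ℝ × ℝ | p.1 < p.2} := by
  have hbox : Ioo a (a + 1) ×ˢ Ioo (a + 1) (a + 2) ⊆ {p : ℝ × ℝ | p.1 < p.2} :=
    fun p ⟨h1, h2⟩ ↦ h1.2.trans h2.1
  refine lt_of_lt_of_le ?_ (measure_mono hbox)
  rw [Measure.prod_prod, Measure.restrict_apply' measurableSet_Ioi,
    Measure.restrict_apply' measurableSet_Ioi,
    inter_eq_left.2 Ioo_subset_Ioi_self,
    inter_eq_left.2 (Ioo_subset_Ioi_self.trans (Ioi_subset_Ioi (lt_add_one a).le)),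
    Real.volume_Ioo, Real.volume_Ioo]
  norm_num

lemma quartic_exponent_le (s x : ℝ) :
    -x ^ 4 / 4 - s * x ^ 2 / 2 ≤ (2 + s ^ 2 / 2) + -x := by
  nlinarith [sq_nonneg (s + x ^ 2 / 2), sq_nonneg (x ^ 2 - 2), sq_nonneg (x - 1)]

lemma integrableOn_rpow_mul_exp_quartic (s : ℝ) {a : ℝ} (ha : -1 < a) :
    IntegrableOn (fun x : ℝ ↦ x ^ a * exp (-x ^ 4 / 4 - s * x ^ 2 / 2)) (Ioi 0) := by
  have hGamma : IntegrableOn (fun x : ℝ ↦ exp (-x) * x ^ a) (Ioi 0) := by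
    simpa using Real.GammaIntegral_convergent (s := a + 1) (by linarith)
  refine (hGamma.const_mul (exp (2 + s ^ 2 / 2))).mono' ?_ ?_
  · refine ContinuousOn.aestronglyMeasurable (fun x hx ↦ ContinuousAt.continuousWithinAt ?_)
      measurableSet_Ioi
    exact (continuousAt_rpow_const x a (Or.inl (ne_of_gt hx))).mul (by fun_prop)
  · filter_upwards [ae_restrict_mem measurableSet_Ioi] with x (hx : 0 < x)
    rw [norm_of_nonneg (by positivity), mul_left_comm, ← mul_assoc, ← exp_add, mul_comm (exp _)]
    gcongr
    linarith [quartic_exponent_le s x]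

lemma rpow_mul_rpow_mul_exp_eqOn (a b s : ℝ) :
    EqOn (fun x : ℝ ↦ x ^ a * (x ^ b * exp (-x ^ 4 / 4 - s * x ^ 2 / 2)))
      (fun x ↦ x ^ (a + b) * exp (-x ^ 4 / 4 - s * x ^ 2 / 2)) (Ioi 0) :=
  fun x (hx : 0 < x) ↦ by simp only [rpow_add hx, mul_assoc]

lemma integrableOn_rpow_mul_rpow_mul_exp (s : ℝ) {a b : ℝ} (hab : -1 < a + b) :
    IntegrableOn (fun x : ℝ ↦ x ^ a * (x ^ b * exp (-x ^ 4 / 4 - s * x ^ 2 / 2))) (Ioi 0) :=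
  (integrableOn_rpow_mul_exp_quartic s hab).congr_fun (rpow_mul_rpow_mul_exp_eqOn a b s).symm
    measurableSet_Ioi

lemma setIntegral_rpow_mul_rpow_mul_exp (a b s : ℝ) :
    ∫ x in Ioi 0, x ^ a * (x ^ b * exp (-x ^ 4 / 4 - s * x ^ 2 / 2)) = I (a + b) s :=
  setIntegral_congr_fun measurableSet_Ioi (rpow_mul_rpow_mul_exp_eqOn a b s)

/-- The moment ratio `I_{q+k}(s)/I_k(s)` is strictly increasing in the order `k`, in the
cross-multiplied form `I_{q+k'}(s) I_k(s) > I_{q+k}(s) I_{k'}(s)` for `-1 < k < k'`, `q > 0`. -/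
theorem moment_ratio_strict_mono (k k' q s : ℝ) (hk : -1 < k) (hkk' : k < k') (hq : 0 < q) :
    I (q + k) s * I k' s < I (q + k') s * I k s := by
  set r := k' - k
  have hr : 0 < r := sub_pos.2 hkk'
  have hqr : EqOn (fun x : ℝ ↦ x ^ q * x ^ r * (x ^ k * exp (-x ^ 4 / 4 - s * x ^ 2 / 2)))
      (fun x ↦ x ^ (q + r) * (x ^ k * exp (-x ^ 4 / 4 - s * x ^ 2 / 2))) (Ioi 0) :=
    fun x (hx : 0 < x) ↦ by dsimp only; rw [rpow_add hx]
  have key := integral_mul_integral_lt_of_strictMonoOn (μ := volume.restrict (Ioi 0))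
    ((strictMonoOn_rpow_Ici_of_exponent_pos hq).mono Ioi_subset_Ici_self)
    ((strictMonoOn_rpow_Ici_of_exponent_pos hr).mono Ioi_subset_Ici_self)
    (fun x (hx : 0 < x) ↦ by positivity) (ae_restrict_mem measurableSet_Ioi)
    (volume_restrict_Ioi_prod_lt_pos 0) (integrableOn_rpow_mul_exp_quartic s hk)
    (integrableOn_rpow_mul_rpow_mul_exp s (by linarith))
    (integrableOn_rpow_mul_rpow_mul_exp s (by linarith))
    ((integrableOn_rpow_mul_rpow_mul_exp s (by linarith)).congr_fun hqr.symm measurableSet_Ioi)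
  rwa [setIntegral_congr_fun measurableSet_Ioi hqr, setIntegral_rpow_mul_rpow_mul_exp,
    setIntegral_rpow_mul_rpow_mul_exp, setIntegral_rpow_mul_rpow_mul_exp, sub_add_cancel,
    add_assoc, sub_add_cancel] at key
end
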